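/- arXiv:2301.09777 — 6 statements merged into one kernel-verified Lean document; each statement's English description precedes it below -/
import Mathlib

section
/- Assume the Cauchy matrix C is invertible. Then the sum of all entries of its inverse C⁻¹ equals ∑_{k=1}^{n} x_k + ∑_{k=1}^{n} y_k. -/
/-- **Entry sum of the inverse Cauchy matrix.**
If every pairwise sum `xᵢ + yⱼ` is invertible and the Cauchy matrix
`C = ((xᵢ + yⱼ)⁻¹)` is invertible, then the sum of all entries of `C⁻¹`
is `∑ xₖ + ∑ yₖ`. -/
theorem sum_entries_inv_cauchyMatrix
    {R : Type*} [CommRing R] {n : ℕ}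
    (x y : Fin n → R) (h : ∀ i j, IsUnit (x i + y j))
    (C : Matrix (Fin n) (Fin n) R)
    (hC : C = Matrix.of fun i j => Ring.inverse (x i + y j))
    (hinv : IsUnit C.det) :
    ∑ i, ∑ j, C⁻¹ i j = ∑ k, x k + ∑ k, y k := by
  have hCD : C * C⁻¹ = 1 := Matrix.mul_nonsing_inv C hinv
  have hDC : C⁻¹ * C = 1 := Matrix.nonsing_inv_mul C hinv
  set D := C⁻¹ with hD
  set X := Matrix.diagonal x with hX
  set Y := Matrix.diagonal y with hY
  have hJ : X * C + C * Y = Matrix.of (fun _ _ => (1 : R)) := by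
    ext i j
    simp only [hX, hY, hC, Matrix.add_apply, Matrix.diagonal_mul, Matrix.mul_diagonal,
      Matrix.of_apply]
    rw [mul_comm (Ring.inverse _) (y j), ← add_mul]
    exact Ring.mul_inverse_cancel _ (h i j)
  have key : Matrix.trace ((X * C + C * Y) * D) = Matrix.trace X + Matrix.trace Y := by
    rw [Matrix.add_mul, Matrix.trace_add, Matrix.mul_assoc, hCD, Matrix.mul_one,
      Matrix.trace_mul_comm, ← Matrix.mul_assoc, hDC, Matrix.one_mul,
      Matrix.trace_diagonal, Matrix.trace_diagonal]
  rw [hJ] at key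
  have hsum : ∑ i, ∑ j, D i j =
      Matrix.trace (Matrix.of (fun _ _ => (1 : R)) * D) := by
    simp only [Matrix.trace, Matrix.diag_apply, Matrix.mul_apply, Matrix.of_apply, one_mul]
    exact Finset.sum_comm
  rw [hsum, key]
  simp [hX, hY, Matrix.trace_diagonal]
end

section
/- The sum of all entries of the adjugate matrix adj C of the Cauchy matrix C equals (∑_{k=1}^{n} x_k + ∑_{k=1}^{n} y_k) · det C. -/
/-- **Entry sum of the adjugate of the Cauchy matrix.**
If every pairwise sum `xᵢ + yⱼ` is invertible, then the sum of all entries of the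
adjugate of the Cauchy matrix `C = ((xᵢ + yⱼ)⁻¹)` is `(∑ xₖ + ∑ yₖ) · det C`. -/
theorem sum_entries_adjugate_cauchyMatrix
    {R : Type*} [CommRing R] {n : ℕ}
    (x y : Fin n → R) (h : ∀ i j, IsUnit (x i + y j))
    (C : Matrix (Fin n) (Fin n) R)
    (hC : C = Matrix.of fun i j => Ring.inverse (x i + y j)) :
    ∑ i, ∑ j, C.adjugate i j = (∑ k, x k + ∑ k, y k) * C.det := by
  have hJ : Matrix.diagonal x * C + C * Matrix.diagonal y
      = Matrix.of (fun _ _ => (1 : R)) := by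
    ext i j
    simp only [Matrix.add_apply, Matrix.diagonal_mul, Matrix.mul_diagonal, hC,
      Matrix.of_apply]
    rw [mul_comm (Ring.inverse (x i + y j)) (y j), ← add_mul]
    exact Ring.mul_inverse_cancel _ (h i j)
  have key := congrArg (fun M => (M * C.adjugate).trace) hJ
  simp only [add_mul, Matrix.trace_add, mul_assoc, Matrix.mul_adjugate] at key
  rw [Matrix.trace_mul_comm C (Matrix.diagonal y * C.adjugate), mul_assoc,
    Matrix.adjugate_mul] at key
  simp only [Matrix.mul_smul, mul_one, Matrix.trace_smul, Matrix.trace_diagonal,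
    smul_eq_mul] at key
  have hR : ((Matrix.of (fun _ _ => (1 : R))) * C.adjugate).trace
      = ∑ i, ∑ j, C.adjugate i j := by
    refine Eq.trans ?_ Finset.sum_comm
    simp [Matrix.trace, Matrix.mul_apply, Matrix.diag]
  rw [hR] at key
  rw [← key]
  ring
end

section
/- Let D be the (n+1)×(n+1) matrix obtained from the Cauchy matrix C by appending a row of all 1's at the bottom and a column of all 1's at the right, with entry 0 in the bottom-right corner (so D_{i,j} = (x_i+y_j)⁻¹ for i,j ≤ n, D_{n+1,j} = 1 for j ≤ n, D_{i,n+1} = 1 for i ≤ n, and D_{n+1,n+1} = 0). Then det D = −(∑_{k=1}^{n} x_k + ∑_{k=1}^{n} y_k) · det C. -/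
open Matrix Finset

section AuxLemmas

variable {R : Type*} [CommRing R] {m : Type*} [Fintype m] [DecidableEq m]

private lemma updColComm_aux (M : Matrix m m R) {j k : m} (hjk : j ≠ k) (u v : m → R) :
    (M.updateCol j u).updateCol k v = (M.updateCol k v).updateCol j u := by
  ext i l
  simp only [Matrix.updateCol_apply]
  split_ifs with h1 h2 <;> simp_all

private lemma auxUpdate_aux (A : Matrix m m R) (u : m → R) (s : Finset m) :
    ∀ k ∉ s, ((Matrix.of fun i j => A i j - if j ∈ s then u i else 0).updateCol k u).det
      = (A.updateCol k u).det := by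
  induction s using Finset.induction_on with
  | empty =>
    intro k _
    have : (Matrix.of fun i j => A i j - if j ∈ (∅ : Finset m) then u i else 0) = A := by
      ext i l; simp
    rw [this]
  | @insert j s hj ih =>
    intro k hk
    have hkj : k ≠ j := by rintro rfl; exact hk (mem_insert_self _ _)
    have hks : k ∉ s := fun hh => hk (mem_insert_of_mem hh)
    have hM : (Matrix.of fun i l => A i l - if l ∈ insert j s then u i else 0)
        = (Matrix.of fun i l => A i l - if l ∈ s then u i else 0).updateCol j
            (fun i => A i j - u i) := by
      ext i l
      rcases eq_or_ne l j with rfl | hl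
      · simp
      · simp [Matrix.updateCol_ne hl, Finset.mem_insert, hl]
    rw [hM, updColComm_aux _ (Ne.symm hkj)]
    set N := (Matrix.of fun i l => A i l - if l ∈ s then u i else 0).updateCol k u with hN
    have hNij : ∀ i, N i j = A i j := by
      intro i
      rw [hN, Matrix.updateCol_ne (Ne.symm hkj)]
      simp [hj]
    have hcol : (fun i => A i j - u i) = (fun i => N i j) + (-1 : R) • u := by
      funext i; simp [hNij i, sub_eq_add_neg]
    rw [hcol, Matrix.det_updateCol_add, Matrix.det_updateCol_smul,
      Matrix.updateCol_eq_self]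
    have hzero : (N.updateCol j u).det = 0 := by
      refine Matrix.det_zero_of_column_eq hkj.symm fun i => ?_
      rw [Matrix.updateCol_self, Matrix.updateCol_ne hkj, hN, Matrix.updateCol_self]
    rw [hzero, ih k hks]
    ring

private lemma detSubCols_aux (A : Matrix m m R) (u : m → R) (s : Finset m) :
    (Matrix.of fun i j => A i j - if j ∈ s then u i else 0).det
      = A.det - ∑ j ∈ s, (A.updateCol j u).det := by
  induction s using Finset.induction_on with
  | empty =>
    have : (Matrix.of fun i j => A i j - if j ∈ (∅ : Finset m) then u i else 0) = A := by
      ext i l; simp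
    rw [this]; simp
  | @insert j s hj ih =>
    have hM : (Matrix.of fun i l => A i l - if l ∈ insert j s then u i else 0)
        = (Matrix.of fun i l => A i l - if l ∈ s then u i else 0).updateCol j
            (fun i => A i j - u i) := by
      ext i l
      rcases eq_or_ne l j with rfl | hl
      · simp
      · simp [Matrix.updateCol_ne hl, Finset.mem_insert, hl]
    set N := (Matrix.of fun i l => A i l - if l ∈ s then u i else 0) with hN
    have hNij : ∀ i, N i j = A i j := by intro i; simp [hN, hj]
    have hcol : (fun i => A i j - u i) = (fun i => N i j) + (-1 : R) • u := by
      funext i; simp [hNij i, sub_eq_add_neg]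
    rw [hM, hcol, Matrix.det_updateCol_add, Matrix.det_updateCol_smul,
      Matrix.updateCol_eq_self, ih, auxUpdate_aux A u s j hj, Finset.sum_insert hj]
    ring

end AuxLemmas

/-- **Bordered Cauchy determinant.**
Let `C` be the Cauchy matrix (all pairwise sums `xᵢ + yⱼ` invertible), and let `D` be
the `(n+1) × (n+1)` matrix obtained from `C` by appending a row of `1`s at the bottom
and a column of `1`s at the right, with a `0` in the bottom-right corner. Then
`det D = -(∑ xₖ + ∑ yₖ) · det C`. -/
theorem det_bordered_cauchyMatrix
    {R : Type*} [CommRing R] {n : ℕ}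
    (x y : Fin n → R) (h : ∀ i j, IsUnit (x i + y j))
    (C : Matrix (Fin n) (Fin n) R)
    (hC : C = Matrix.of fun i j => Ring.inverse (x i + y j))
    (D : Matrix (Fin (n + 1)) (Fin (n + 1)) R)
    (hD : D = Matrix.of fun (i j : Fin (n + 1)) =>
      if hi : (i : ℕ) < n then
        (if hj : (j : ℕ) < n then Ring.inverse (x ⟨i, hi⟩ + y ⟨j, hj⟩) else 1)
      else
        (if (j : ℕ) < n then 1 else 0)) :
    D.det = -(∑ k, x k + ∑ k, y k) * C.det := by
  classical
  -- Step 1: the sum of the entries of the adjugate of `C` is `(∑ x + ∑ y) * det C`.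
  have hadj : ∑ j, ∑ k, C.adjugate j k = (∑ k, x k + ∑ k, y k) * C.det := by
    have hXC : Matrix.diagonal x * C + C * Matrix.diagonal y = Matrix.of fun _ _ => (1:R) := by
      ext i j
      rw [Matrix.add_apply, Matrix.diagonal_mul, Matrix.mul_diagonal, Matrix.of_apply]
      rw [hC]
      show x i * Ring.inverse (x i + y j) + Ring.inverse (x i + y j) * y j = 1
      rw [mul_comm (Ring.inverse _) (y j), ← add_mul, Ring.mul_inverse_cancel _ (h i j)]
    have h1 := congrArg (fun M => Matrix.trace (C.adjugate * M)) hXC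
    simp only [Matrix.mul_add, Matrix.trace_add] at h1
    rw [← Matrix.mul_assoc, Matrix.trace_mul_comm _ C, ← Matrix.mul_assoc,
        Matrix.mul_adjugate, ← Matrix.mul_assoc, Matrix.adjugate_mul,
        Matrix.smul_mul, Matrix.one_mul, Matrix.smul_mul, Matrix.one_mul,
        Matrix.trace_smul, Matrix.trace_smul, Matrix.trace_diagonal, Matrix.trace_diagonal] at h1
    have h2 : Matrix.trace (C.adjugate * Matrix.of fun _ _ => (1:R))
        = ∑ j, ∑ k, C.adjugate j k := by
      simp [Matrix.trace, Matrix.diag, Matrix.mul_apply]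
    rw [h2] at h1
    rw [← h1]
    simp [smul_eq_mul]
    ring
  -- Block decomposition of `D`.
  set B : Matrix (Fin n) (Fin 1) R := Matrix.of fun _ _ => (1:R) with hB
  set Cr : Matrix (Fin 1) (Fin n) R := Matrix.of fun _ _ => (1:R) with hCr
  have hblock : D.det
      = (Matrix.fromBlocks C B Cr (0 : Matrix (Fin 1) (Fin 1) R)).det := by
    rw [← Matrix.det_submatrix_equiv_self finSumFinEquiv D]
    congr 1
    ext i j
    cases i with
    | inl a =>
      cases j with
      | inl b =>
        simp [hD, hC, Matrix.submatrix_apply, finSumFinEquiv_apply_left, a.isLt, b.isLt]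
      | inr b =>
        simp [hD, hB, Matrix.submatrix_apply, finSumFinEquiv_apply_left,
          finSumFinEquiv_apply_right, a.isLt]
    | inr a =>
      cases j with
      | inl b =>
        simp [hD, hCr, Matrix.submatrix_apply, finSumFinEquiv_apply_left,
          finSumFinEquiv_apply_right, b.isLt]
      | inr b =>
        simp [hD, Matrix.submatrix_apply, finSumFinEquiv_apply_right]
  -- Relate the `0`-corner bordered determinant to the `1`-corner one.
  set M0 := Matrix.fromBlocks C B Cr (0 : Matrix (Fin 1) (Fin 1) R) with hM0
  have hcorner : (Matrix.fromBlocks C B Cr (1 : Matrix (Fin 1) (Fin 1) R)).det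
      = M0.det + C.det := by
    have hup : Matrix.fromBlocks C B Cr (1 : Matrix (Fin 1) (Fin 1) R)
        = M0.updateRow (Sum.inr 0) (M0 (Sum.inr 0) + Pi.single (Sum.inr 0) 1) := by
      ext i j
      rcases i with a | a
      · rw [Matrix.updateRow_ne (by simp)]
        rcases j with b | b <;> rfl
      · have ha : a = 0 := Subsingleton.elim _ _
        subst ha
        rw [Matrix.updateRow_self]
        rcases j with b | b
        · simp [hM0, Matrix.fromBlocks, Pi.single_apply, hCr]
        · have hb : b = 0 := Subsingleton.elim _ _
          subst hb
          simp [hM0, Matrix.fromBlocks, Pi.single_apply]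
    rw [hup, Matrix.det_updateRow_add, Matrix.updateRow_eq_self]
    congr 1
    have hsingle : M0.updateRow (Sum.inr 0) (Pi.single (Sum.inr 0) 1)
        = Matrix.fromBlocks C B 0 (1 : Matrix (Fin 1) (Fin 1) R) := by
      ext i j
      rcases i with a | a
      · rw [Matrix.updateRow_ne (by simp)]
        rcases j with b | b <;> rfl
      · have ha : a = 0 := Subsingleton.elim _ _
        subst ha
        rw [Matrix.updateRow_self]
        rcases j with b | b
        · simp [Matrix.fromBlocks, Pi.single_apply]
        · have hb : b = 0 := Subsingleton.elim _ _
          subst hb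
          simp [Matrix.fromBlocks, Pi.single_apply]
    rw [hsingle, Matrix.det_fromBlocks_zero₂₁, Matrix.det_one, mul_one]
  -- Compute the `1`-corner determinant via the Schur complement.
  have hone : (Matrix.fromBlocks C B Cr (1 : Matrix (Fin 1) (Fin 1) R)).det
      = C.det - ∑ j, (C.updateCol j (fun _ => (1:R))).det := by
    rw [Matrix.det_fromBlocks_one₂₂]
    have hsub : C - B * Cr
        = Matrix.of fun i j => C i j - if j ∈ (univ : Finset (Fin n)) then (1:R) else 0 := by
      ext i j
      simp [Matrix.sub_apply, Matrix.mul_apply, hB, hCr]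
    rw [hsub, detSubCols_aux]
  -- The sum of the column-replacement determinants is the sum of adjugate entries.
  have hcramer : ∑ j, (C.updateCol j (fun _ => (1:R))).det
      = ∑ j, ∑ k, C.adjugate j k := by
    have : ∀ j, (C.updateCol j (fun _ => (1:R))).det
        = (C.adjugate *ᵥ fun _ => (1:R)) j := by
      intro j
      rw [← Matrix.cramer_eq_adjugate_mulVec, Matrix.cramer_apply]
    simp only [this]
    simp [Matrix.mulVec, dotProduct]
  -- Put everything together.
  have key : M0.det + C.det = C.det - (∑ k, x k + ∑ k, y k) * C.det := by
    rw [← hcorner, hone, hcramer, hadj]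
  rw [hblock]
  linear_combination key
end

section
/- The Cauchy matrix C is invertible if and only if the differences x_i − x_j and y_i − y_j are invertible for all 1 ≤ i < j ≤ n (i.e., the x's are pairwise strongly distinct and the y's are pairwise strongly distinct). -/
open Finset Matrix Polynomial

private lemma isUnit_finset_prod_iff' {M ι : Type*} [CommMonoid M] (s : Finset ι) (f : ι → M) :
    IsUnit (∏ i ∈ s, f i) ↔ ∀ i ∈ s, IsUnit (f i) := by
  constructor
  · intro hu i hi
    exact isUnit_of_dvd_unit (Finset.dvd_prod_of_mem f hi) hu
  · intro hf
    exact Finset.prod_induction f IsUnit (fun _ _ => IsUnit.mul) isUnit_one hf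

private noncomputable def coeffMat {R : Type*} [CommRing R] {n : ℕ} (y : Fin n → R) :
    Matrix (Fin n) (Fin n) R :=
  Matrix.of fun m j =>
    (∏ k ∈ ({j}ᶜ : Finset (Fin n)), (Polynomial.X + Polynomial.C (y k))).coeff m

private lemma natDegree_lt_aux {R : Type*} [CommRing R] [Nontrivial R] {n : ℕ} (y : Fin n → R) (j : Fin n) :
    (∏ k ∈ ({j}ᶜ : Finset (Fin n)), (Polynomial.X + Polynomial.C (y k))).natDegree < n := by
  rw [Polynomial.natDegree_prod_of_monic _ _ (fun k _ => Polynomial.monic_X_add_C (y k))]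
  simp only [Polynomial.natDegree_X_add_C]
  rw [Finset.sum_const, smul_eq_mul, mul_one, Finset.card_compl, Finset.card_singleton,
    Fintype.card_fin]
  exact Nat.sub_lt j.pos one_pos

private lemma sum_pow_mul_coeff {R : Type*} [CommRing R] {n : ℕ} (t : R)
    (p : Polynomial R) (hd : p.natDegree < n) :
    (∑ m : Fin n, t ^ (m : ℕ) * p.coeff (m : ℕ)) = p.eval t := by
  calc (∑ m : Fin n, t ^ (m : ℕ) * p.coeff (m : ℕ))
      = ∑ m ∈ Finset.range n, t ^ m * p.coeff m :=
        Fin.sum_univ_eq_sum_range (fun m => t ^ m * p.coeff m) n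
    _ = ∑ m ∈ Finset.range n, p.coeff m * t ^ m :=
        Finset.sum_congr rfl fun m _ => mul_comm _ _
    _ = p.eval t := (Polynomial.eval_eq_sum_range' hd t).symm

private lemma eval_entry {R : Type*} [CommRing R] [Nontrivial R] {n : ℕ} (y : Fin n → R)
    (j : Fin n) (t : R) :
    (∑ m : Fin n, t ^ (m : ℕ) * (coeffMat y) m j) = ∏ k ∈ ({j}ᶜ : Finset (Fin n)), (t + y k) := by
  simp only [coeffMat, of_apply]
  rw [sum_pow_mul_coeff t _ (natDegree_lt_aux y j)]
  simp [Polynomial.eval_prod]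

private lemma decomp {R : Type*} [CommRing R] [Nontrivial R] {n : ℕ} (x y : Fin n → R) :
    (Matrix.of fun i j => ∏ k ∈ ({j}ᶜ : Finset (Fin n)), (x i + y k)) =
      Matrix.vandermonde x * coeffMat y := by
  ext i j
  rw [Matrix.mul_apply]
  simp only [vandermonde, of_apply]
  rw [eval_entry y j (x i)]

private lemma vdmNegMul {R : Type*} [CommRing R] [Nontrivial R] {n : ℕ} (y : Fin n → R) :
    Matrix.vandermonde (fun j => -y j) * coeffMat y =
      Matrix.diagonal (fun j => ∏ k ∈ ({j}ᶜ : Finset (Fin n)), (y k - y j)) := by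
  ext j j'
  rw [Matrix.mul_apply]
  simp only [vandermonde, of_apply]
  rw [eval_entry y j' (-y j)]
  by_cases hjj : j = j'
  · subst hjj
    rw [Matrix.diagonal_apply_eq]
    exact Finset.prod_congr rfl fun k _ => by ring
  · rw [Matrix.diagonal_apply_ne _ hjj]
    apply Finset.prod_eq_zero (i := j)
    · simp [Finset.mem_compl, hjj]
    · ring

private lemma det_coeffMat {R : Type*} [CommRing R] [IsDomain R] {n : ℕ} (y : Fin n → R)
    (hy : ∀ i j : Fin n, i ≠ j → y i ≠ y j) :
    (coeffMat y).det = ∏ i, ∏ j ∈ Ioi i, (y j - y i) := by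
  have hW : (Matrix.vandermonde fun j => -y j).det = ∏ i, ∏ j ∈ Ioi i, (y i - y j) := by
    rw [Matrix.det_vandermonde]
    exact Finset.prod_congr rfl fun i _ => Finset.prod_congr rfl fun j _ => by ring
  have h1 : (Matrix.vandermonde fun j => -y j).det * (coeffMat y).det
      = ∏ j, ∏ k ∈ ({j}ᶜ : Finset (Fin n)), (y k - y j) := by
    rw [← Matrix.det_mul, vdmNegMul, Matrix.det_diagonal]
  have h2 : (∏ j, ∏ k ∈ ({j}ᶜ : Finset (Fin n)), (y k - y j))
      = (∏ i, ∏ j ∈ Ioi i, (y i - y j)) * ∏ i, ∏ j ∈ Ioi i, (y j - y i) := by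
    have key : (∏ i, ∏ j ∈ Ioi i, (y j - y i) * (y i - y j))
        = ∏ i, ∏ j ∈ ({i}ᶜ : Finset (Fin n)), (y j - y i) :=
      by
        have h := Finset.prod_prod_Ioi_mul_eq_prod_prod_off_diag (fun k j => y k - y j)
        convert h using 2
    rw [← key, ← Finset.prod_mul_distrib]
    refine Finset.prod_congr rfl fun i _ => ?_
    rw [← Finset.prod_mul_distrib]
    exact Finset.prod_congr rfl fun j _ => mul_comm _ _
  have hWne : (Matrix.vandermonde fun j => -y j).det ≠ 0 := by
    rw [hW]
    refine Finset.prod_ne_zero_iff.mpr fun i _ => Finset.prod_ne_zero_iff.mpr fun j hj => ?_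
    exact sub_ne_zero.mpr (hy i j (ne_of_lt (Finset.mem_Ioi.mp hj)))
  apply mul_left_cancel₀ hWne
  rw [h1, h2, hW]

private lemma det_prod_compl {R : Type*} [CommRing R] {n : ℕ} (x y : Fin n → R) :
    (Matrix.of fun i j => ∏ k ∈ ({j}ᶜ : Finset (Fin n)), (x i + y k)).det =
      (∏ i, ∏ j ∈ Ioi i, (x j - x i)) * ∏ i, ∏ j ∈ Ioi i, (y j - y i) := by
  let S := MvPolynomial (Fin n ⊕ Fin n) ℤ
  let X : Fin n → S := fun i => MvPolynomial.X (Sum.inl i)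
  let Y : Fin n → S := fun j => MvPolynomial.X (Sum.inr j)
  have hy : ∀ i j : Fin n, i ≠ j → Y i ≠ Y j := fun i j hij h' =>
    hij (Sum.inr_injective (MvPolynomial.X_injective h'))
  have hgen : (Matrix.of fun i j => ∏ k ∈ ({j}ᶜ : Finset (Fin n)), (X i + Y k)).det =
      (∏ i, ∏ j ∈ Ioi i, (X j - X i)) * ∏ i, ∏ j ∈ Ioi i, (Y j - Y i) := by
    rw [decomp, Matrix.det_mul, Matrix.det_vandermonde, det_coeffMat Y hy]
  let φ : S →+* R := MvPolynomial.eval₂Hom (Int.castRingHom R) (Sum.elim x y)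
  have hφX : ∀ i, φ (X i) = x i := fun i => MvPolynomial.eval₂Hom_X' _ _ _
  have hφY : ∀ j, φ (Y j) = y j := fun j => MvPolynomial.eval₂Hom_X' _ _ _
  have hmap := congrArg φ hgen
  rw [RingHom.map_det, RingHom.mapMatrix_apply] at hmap
  have hM : ((Matrix.of fun i j => ∏ k ∈ ({j}ᶜ : Finset (Fin n)), (X i + Y k)).map φ) =
      (Matrix.of fun i j => ∏ k ∈ ({j}ᶜ : Finset (Fin n)), (x i + y k)) := by
    ext i j
    simp [Matrix.map_apply, map_prod, hφX, hφY]
  rw [hM] at hmap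
  rw [hmap]
  simp [map_prod, _root_.map_mul, map_sub, hφX, hφY]

/-- **Invertibility criterion for the Cauchy matrix.**
If every pairwise sum `xᵢ + yⱼ` is invertible, then the Cauchy matrix
`C = ((xᵢ + yⱼ)⁻¹)` is invertible if and only if the `xᵢ` are pairwise strongly
distinct and the `yᵢ` are pairwise strongly distinct, i.e. all the differences
`xᵢ - xⱼ` and `yᵢ - yⱼ` (for `i < j`) are invertible. -/
theorem isUnit_cauchyMatrix_iff
    {R : Type*} [CommRing R] {n : ℕ}
    (x y : Fin n → R) (h : ∀ i j, IsUnit (x i + y j))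
    (C : Matrix (Fin n) (Fin n) R)
    (hC : C = Matrix.of fun i j => Ring.inverse (x i + y j)) :
    IsUnit C ↔ ∀ i j : Fin n, i < j → IsUnit (x i - x j) ∧ IsUnit (y i - y j) := by
  have h2 : (Matrix.of fun i j => (∏ k, (x i + y k)) * Ring.inverse (x i + y j)) =
      Matrix.of fun i j => ∏ k ∈ ({j}ᶜ : Finset (Fin n)), (x i + y k) := by
    ext i j
    simp only [of_apply]
    rw [← Finset.mul_prod_erase Finset.univ (fun k => x i + y k) (Finset.mem_univ j),
      mul_comm (x i + y j), mul_assoc, Ring.mul_inverse_cancel _ (h i j), mul_one,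
      Finset.compl_singleton]
  have key : (∏ i, ∏ k, (x i + y k)) * C.det =
      (∏ i, ∏ j ∈ Ioi i, (x j - x i)) * ∏ i, ∏ j ∈ Ioi i, (y j - y i) := by
    rw [← det_prod_compl x y, ← h2, hC]
    exact (Matrix.det_mul_column (fun i => ∏ k, (x i + y k)) _).symm
  have hu : IsUnit (∏ i, ∏ k, (x i + y k)) :=
    (isUnit_finset_prod_iff' _ _).mpr fun i _ =>
      (isUnit_finset_prod_iff' _ _).mpr fun k _ => h i k
  rw [Matrix.isUnit_iff_isUnit_det]
  have hiff : IsUnit C.det ↔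
      IsUnit ((∏ i, ∏ j ∈ Ioi i, (x j - x i)) * ∏ i, ∏ j ∈ Ioi i, (y j - y i)) := by
    constructor
    · intro hd
      rw [← key]
      exact hu.mul hd
    · intro hrhs
      rw [← key] at hrhs
      exact isUnit_of_dvd_unit (dvd_mul_left _ _) hrhs
  rw [hiff]
  constructor
  · intro hurhs i j hij
    have hux : IsUnit (∏ i, ∏ j ∈ Ioi i, (x j - x i)) :=
      isUnit_of_dvd_unit (dvd_mul_right _ _) hurhs
    have huy : IsUnit (∏ i, ∏ j ∈ Ioi i, (y j - y i)) :=
      isUnit_of_dvd_unit (dvd_mul_left _ _) hurhs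
    have hx := (isUnit_finset_prod_iff' _ _).mp
      ((isUnit_finset_prod_iff' _ _).mp hux i (Finset.mem_univ i)) j (Finset.mem_Ioi.mpr hij)
    have hy := (isUnit_finset_prod_iff' _ _).mp
      ((isUnit_finset_prod_iff' _ _).mp huy i (Finset.mem_univ i)) j (Finset.mem_Ioi.mpr hij)
    exact ⟨IsUnit.sub_iff.mp hx, IsUnit.sub_iff.mp hy⟩
  · intro hall
    refine IsUnit.mul ?_ ?_ <;>
      refine (isUnit_finset_prod_iff' _ _).mpr fun i _ =>
        (isUnit_finset_prod_iff' _ _).mpr fun j hj => ?_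
    · exact IsUnit.sub_iff.mp (hall i j (Finset.mem_Ioi.mp hj)).1
    · exact IsUnit.sub_iff.mp (hall i j (Finset.mem_Ioi.mp hj)).2
end

section
/- Assume the matrix F is invertible. Then the sum of all entries of F⁻¹ equals 1 / min{x_1, x_2, …, x_n, y_1, y_2, …, y_n}. -/
/-- **Entry sum of the inverse min-matrix.**
Let `n ≥ 1` and let `F` be the `n × n` real matrix with entries `min {xᵢ, yⱼ}`.
If `F` is invertible, then the sum of all entries of `F⁻¹` is
`1 / min {x₁, …, xₙ, y₁, …, yₙ}`. -/
theorem sum_entries_inv_minMatrix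
    {n : ℕ} (x y : Fin (n + 1) → ℝ)
    (F : Matrix (Fin (n + 1)) (Fin (n + 1)) ℝ)
    (hF : F = Matrix.of fun i j => min (x i) (y j))
    (hinv : IsUnit F.det) :
    ∑ i, ∑ j, F⁻¹ i j
      = 1 / min (Finset.univ.inf' Finset.univ_nonempty x)
                (Finset.univ.inf' Finset.univ_nonempty y) := by
  set a := Finset.univ.inf' Finset.univ_nonempty x with haa
  set b := Finset.univ.inf' Finset.univ_nonempty y with hbb
  obtain ⟨i0, -, hx0⟩ := Finset.exists_mem_eq_inf' (Finset.univ_nonempty) x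
  obtain ⟨j0, -, hy0⟩ := Finset.exists_mem_eq_inf' (Finset.univ_nonempty) y
  have ha : ∀ i, a ≤ x i := fun i => Finset.inf'_le _ (Finset.mem_univ i)
  have hb : ∀ j, b ≤ y j := fun j => Finset.inf'_le _ (Finset.mem_univ j)
  have hdet : F.det ≠ 0 := hinv.ne_zero
  rcases le_total a b with hab | hba
  · -- min is a, row i0 of F is constant a
    have hrow : ∀ j, F i0 j = a := by
      intro j
      rw [hF]
      simp only [Matrix.of_apply]
      rw [← hx0]
      exact min_eq_left (hab.trans (hb j))
    have hane : a ≠ 0 := by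
      intro h0
      exact hdet (Matrix.det_eq_zero_of_row_eq_zero i0
        (fun j => by rw [hrow j, h0]))
    have hFi := Matrix.mul_nonsing_inv F hinv
    have hcol : ∀ j, ∑ i, F⁻¹ i j = if j = i0 then 1/a else 0 := by
      intro j
      have h1 := congrFun (congrFun hFi i0) j
      rw [Matrix.mul_apply] at h1
      have h2 : a * ∑ k, F⁻¹ k j = (1 : Matrix (Fin (n+1)) (Fin (n+1)) ℝ) i0 j := by
        rw [Finset.mul_sum, ← h1]
        exact Finset.sum_congr rfl fun k _ => by rw [hrow]
      by_cases hj : j = i0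
      · subst hj
        rw [Matrix.one_apply_eq] at h2
        simp only [if_pos rfl, if_true, ite_true]
        rw [eq_div_iff hane]
        linear_combination h2
      · rw [Matrix.one_apply_ne' hj] at h2
        simp only [if_neg hj]
        have := mul_eq_zero.mp h2
        tauto
    rw [show ∑ i, ∑ j, F⁻¹ i j = ∑ j, ∑ i, F⁻¹ i j from Finset.sum_comm]
    simp only [hcol]
    rw [Finset.sum_ite_eq' Finset.univ i0 (fun _ => 1/a)]
    simp [min_eq_left hab]
  · -- min is b, column j0 of F is constant b
    have hcolF : ∀ i, F i j0 = b := by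
      intro i
      rw [hF]
      simp only [Matrix.of_apply]
      rw [← hy0]
      exact min_eq_right (hba.trans (ha i))
    have hbne : b ≠ 0 := by
      intro h0
      exact hdet (Matrix.det_eq_zero_of_column_eq_zero j0
        (fun i => by rw [hcolF i, h0]))
    have hFi := Matrix.nonsing_inv_mul F hinv
    have hrowsum : ∀ i, ∑ j, F⁻¹ i j = if i = j0 then 1/b else 0 := by
      intro i
      have h1 := congrFun (congrFun hFi i) j0
      rw [Matrix.mul_apply] at h1
      have h2 : (∑ k, F⁻¹ i k) * b = (1 : Matrix (Fin (n+1)) (Fin (n+1)) ℝ) i j0 := by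
        rw [Finset.sum_mul, ← h1]
        exact Finset.sum_congr rfl fun k _ => by rw [hcolF]
      by_cases hi : i = j0
      · subst hi
        rw [Matrix.one_apply_eq] at h2
        simp only [if_pos rfl, if_true, ite_true]
        rw [eq_div_iff hbne]
        linear_combination h2
      · rw [Matrix.one_apply_ne hi] at h2
        simp only [if_neg hi]
        have := mul_eq_zero.mp h2
        tauto
    simp only [hrowsum]
    rw [Finset.sum_ite_eq' Finset.univ j0 (fun _ => 1/b)]
    simp [min_eq_right hba]
end

section
/- Assume the matrix F is invertible, and assume that x_1 ≤ x_2 ≤ ⋯ ≤ x_n, that y_1 ≤ y_2 ≤ ⋯ ≤ y_n, and that x_1 ≤ y_1. Then for each j ∈ {1, 2, …, n}, the sum of all entries in the j-th column of F⁻¹ (that is, ∑_{k=1}^{n} (F⁻¹)_{k,j}) equals 1/x_1 if j = 1, and equals 0 if j > 1. -/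
/-- **Column sums of the inverse min-matrix.**
Let `n ≥ 1` and let `F` be the `n × n` real matrix with entries `min {xᵢ, yⱼ}`,
where `x₁ ≤ x₂ ≤ ⋯ ≤ xₙ`, `y₁ ≤ y₂ ≤ ⋯ ≤ yₙ` and `x₁ ≤ y₁`. If `F` is invertible,
then for each `j`, the sum of the entries in the `j`-th column of `F⁻¹` is `1/x₁`
if `j = 1`, and `0` otherwise. -/
theorem column_sums_inv_minMatrix
    {n : ℕ} (x y : Fin (n + 1) → ℝ)
    (hx : Monotone x) (hy : Monotone y) (hxy : x 0 ≤ y 0)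
    (F : Matrix (Fin (n + 1)) (Fin (n + 1)) ℝ)
    (hF : F = Matrix.of fun i j => min (x i) (y j))
    (hinv : IsUnit F.det) :
    ∀ j, ∑ k, F⁻¹ k j = if j = 0 then 1 / x 0 else 0 := by
  -- Row 0 of F is constantly x 0
  have hrow : ∀ j, F 0 j = x 0 := by
    intro j
    rw [hF]
    exact min_eq_left (hxy.trans (hy (Fin.zero_le j)))
  -- x 0 ≠ 0, else row 0 is zero and det = 0
  have hx0 : x 0 ≠ 0 := by
    intro h0
    have : F.det = 0 := by
      apply Matrix.det_eq_zero_of_row_eq_zero 0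
      intro j; rw [hrow j, h0]
    rw [this] at hinv
    exact (not_isUnit_zero) hinv
  set w : Fin (n + 1) → ℝ := fun j => if j = 0 then 1 / x 0 else 0 with hw
  have hwF : Matrix.vecMul w F = fun _ => 1 := by
    funext k
    simp only [Matrix.vecMul, dotProduct, hw]
    rw [Finset.sum_eq_single 0]
    · rw [if_pos rfl, hrow k]
      field_simp
    · intro b _ hb; rw [if_neg hb, zero_mul]
    · intro h; exact absurd (Finset.mem_univ 0) h
  have hFinv : F * F⁻¹ = 1 := Matrix.mul_nonsing_inv F hinv
  have key : Matrix.vecMul (fun _ => (1 : ℝ)) F⁻¹ = w := by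
    rw [← hwF, Matrix.vecMul_vecMul, hFinv, Matrix.vecMul_one]
  intro j
  have := congrFun key j
  simp only [Matrix.vecMul, dotProduct, one_mul] at this
  rw [this, hw]
end
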